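/- arXiv:2501.02150 — 5 statements merged into one kernel-verified Lean document; each statement's English description precedes it below -/
import Mathlib

section
/- Let 0 < r₁ < r₂ ≤ 𝐫. Assume: (i) there exist a constant c > 0 and N ∈ ℕ such that for every n ∈ ℕ and every real λ with 2ⁿ ≤ λ < 2^{n+1} and 2^{n−N} > 𝐫⁻¹, one has ε_λ ≤ c · Σ_{j=−N}^{N} ε_{2^{n+j}}; (ii) Σ_{n ∈ ℕ, 2ⁿ ≥ 𝐫⁻¹} ε_{2ⁿ} < ∞; (iii) for every λ ≥ 𝐫⁻¹ and every r ∈ (r₁, r₂), one has f(r/λ) − f(r₁/λ) ≥ −ε_λ. Then f(r) converges as r → 0⁺, either to a real number or to −∞, and in both cases lim_{r→0⁺} f(r) = liminf_{r→0⁺} f(r). -/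
/-!
Write `g λ = f (r₁ / λ)`. Hypothesis (iii) says `g λ ≤ g λ' + ε λ` whenever
`λ' < λ < (r₂ / r₁) λ'`, so `K` steps of ratio `2^(1/K) < r₂ / r₁` cross a dyadic block
`[2ⁿ, 2ⁿ⁺¹]` at a cost which, by (i), is at most `K` times a majorant summable by (ii).
Chaining blocks, `g λ ≤ g λ' + o(1)` for `λ' ≤ λ` as `λ' → ∞`: near `0`, `f` is antitone up
to an error tending to `0`, which forces `limsup f ≤ liminf f < ∞`.
-/

open Filter Set Topology

theorem le_add_sum_Ico_of_partition {g : ℝ → ℝ} {p w : ℕ → ℝ} (hw : ∀ k, 0 ≤ w k) {a b : ℕ}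
    (hstep : ∀ k, a ≤ k → k < b → ∀ x y, p k ≤ x → x ≤ y → y ≤ p (k + 1) → g y ≤ g x + w k)
    (hab : a ≤ b) {x y : ℝ} (hx : p a ≤ x) (hxy : x ≤ y) (hy : y ≤ p b) :
    g y ≤ g x + ∑ k ∈ Finset.Ico a b, w k := by
  induction b, hab using Nat.le_induction generalizing y with
  | base =>
    obtain rfl : y = x := le_antisymm (hy.trans hx) hxy
    simp
  | succ b hab ih =>
    rw [Finset.sum_Ico_succ_top hab]
    have hstep' := fun k hak (hkb : k < b) => hstep k hak (hkb.trans b.lt_succ_self)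
    have hsum : 0 ≤ ∑ k ∈ Finset.Ico a b, w k := Finset.sum_nonneg fun k _ => hw k
    rcases le_total y (p b) with hyb | hby
    · linarith [ih hstep' hxy hyb, hw b]
    rcases le_total x (p b) with hxb | hbx
    · linarith [ih hstep' hxb le_rfl, hstep b hab b.lt_succ_self _ _ le_rfl hby hy]
    · linarith [hstep b hab b.lt_succ_self x y hbx hxy hy]

theorem limsup_le_liminf_of_eventually_le_add {α : Type*} {l : Filter α} {f : α → ℝ}
    (h : ∀ η > 0, ∀ᶠ t in l, ∀ᶠ s in l, f s ≤ f t + η) :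
    limsup (fun x => (f x : EReal)) l ≤ liminf (fun x => (f x : EReal)) l := by
  refine EReal.le_of_forall_lt_iff_le.1 fun z hz => ?_
  obtain ⟨y, hy, hyz⟩ := EReal.lt_iff_exists_real_btwn.1 hz
  have hyz : y < z := EReal.coe_lt_coe_iff.1 hyz
  obtain ⟨t, hty, hts⟩ :=
    ((frequently_lt_of_liminf_lt (by isBoundedDefault) hy).and_eventually
      (h (z - y) (sub_pos.2 hyz))).exists
  calc limsup (fun x => (f x : EReal)) l ≤ ((f t + (z - y) : ℝ) : EReal) :=
        limsup_le_of_le (by isBoundedDefault) (hts.mono fun s hs => EReal.coe_le_coe_iff.2 hs)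
    _ ≤ z := EReal.coe_le_coe_iff.2 (by linarith [EReal.coe_lt_coe_iff.1 hty])

theorem liminf_ne_top_and_tendsto_of_eventually_le_add {α : Type*} {l : Filter α} [l.NeBot]
    {f : α → ℝ} (h : ∀ η > 0, ∀ᶠ t in l, ∀ᶠ s in l, f s ≤ f t + η) :
    liminf (fun x => (f x : EReal)) l ≠ ⊤ ∧
      Tendsto (fun x => (f x : EReal)) l (𝓝 (liminf (fun x => (f x : EReal)) l)) := by
  have hle := limsup_le_liminf_of_eventually_le_add h
  obtain ⟨t, ht⟩ := (h 1 one_pos).exists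
  have hlimsup : limsup (fun x => (f x : EReal)) l ≤ ((f t + 1 : ℝ) : EReal) :=
    limsup_le_of_le (by isBoundedDefault) (ht.mono fun s hs => EReal.coe_le_coe_iff.2 hs)
  exact ⟨ne_top_of_le_ne_top (EReal.coe_ne_top _) ((liminf_le_limsup).trans hlimsup),
    tendsto_of_le_liminf_of_limsup_le le_rfl hle⟩

theorem le_add_mul_of_dyadic_block {g ε : ℝ → ℝ} {K n : ℕ} {w : ℝ} (hK : K ≠ 0) (hw : 0 ≤ w)
    (hstep : ∀ x y, 2 ^ n ≤ x → x < y → y ≤ 2 ^ (K⁻¹ : ℝ) * x → g y ≤ g x + ε y)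
    (hε : ∀ l, 2 ^ n ≤ l → l ≤ 2 ^ (n + 1) → ε l ≤ w) {x y : ℝ}
    (hx : 2 ^ n ≤ x) (hxy : x ≤ y) (hy : y ≤ 2 ^ (n + 1)) :
    g y ≤ g x + K * w := by
  set ρ : ℝ := 2 ^ (K⁻¹ : ℝ)
  have hρ : 1 ≤ ρ := Real.one_le_rpow one_le_two (by positivity)
  have hρK : (2 : ℝ) ^ n * ρ ^ K = 2 ^ (n + 1) := by
    rw [Real.rpow_inv_natCast_pow zero_le_two hK, pow_succ]
  have hchain := le_add_sum_Ico_of_partition (g := g) (p := fun k => 2 ^ n * ρ ^ k)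
    (w := fun _ => w) (fun _ => hw) (a := 0) (b := K) ?_ (Nat.zero_le K) (by simpa using hx) hxy
    (hρK ▸ hy)
  · simpa using hchain
  intro k _ hk u v hu huv hv
  rcases huv.eq_or_lt with rfl | hlt
  · linarith
  have hnu : (2 : ℝ) ^ n ≤ u :=
    (le_mul_of_one_le_right (by positivity) (one_le_pow₀ hρ)).trans hu
  have hvρ : v ≤ ρ * u := calc
    v ≤ 2 ^ n * ρ ^ (k + 1) := hv
    _ = ρ * (2 ^ n * ρ ^ k) := by ring
    _ ≤ ρ * u := by gcongr
  have hvn : v ≤ 2 ^ (n + 1) := calc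
    v ≤ 2 ^ n * ρ ^ (k + 1) := hv
    _ ≤ 2 ^ n * ρ ^ K := by gcongr; exact hk
    _ = 2 ^ (n + 1) := hρK
  linarith [hstep u v hnu hlt hvρ, hε v (hnu.trans hlt.le) hvn]

theorem eventually_le_add_of_summable_dyadic_bound {g ε : ℝ → ℝ} {b : ℕ → ℝ} {K n₀ : ℕ}
    (hK : K ≠ 0) (hstep : ∀ x y, 2 ^ n₀ ≤ x → x < y → y ≤ 2 ^ (K⁻¹ : ℝ) * x → g y ≤ g x + ε y)
    (hb0 : ∀ n, 0 ≤ b n) (hb : Summable b)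
    (hεb : ∀ n, n₀ ≤ n → ∀ l, 2 ^ n ≤ l → l ≤ 2 ^ (n + 1) → ε l ≤ b n) {η : ℝ} (hη : 0 < η) :
    ∀ᶠ x in atTop, ∀ y, x ≤ y → g y ≤ g x + η := by
  have hblock (n : ℕ) (hn : n₀ ≤ n) (x y : ℝ) :
      2 ^ n ≤ x → x ≤ y → y ≤ 2 ^ (n + 1) → g y ≤ g x + K * b n :=
    le_add_mul_of_dyadic_block hK (hb0 n)
      (fun u v hu => hstep u v ((pow_le_pow_right₀ one_le_two hn).trans hu)) (hεb n hn)
  have htail : Tendsto (fun m => K * ∑' i, b (i + m)) atTop (𝓝 0) := by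
    simpa using (tendsto_sum_nat_add b).const_mul (K : ℝ)
  obtain ⟨m, hmη, hm⟩ :=
    ((htail.eventually (gt_mem_nhds hη)).and (eventually_ge_atTop n₀)).exists
  filter_upwards [eventually_ge_atTop ((2 : ℝ) ^ m)] with x hx y hxy
  obtain ⟨k, hk⟩ := pow_unbounded_of_one_lt y one_lt_two
  have hchain := le_add_sum_Ico_of_partition (p := fun n => (2 : ℝ) ^ n) (w := fun n => K * b n)
    (fun n => mul_nonneg K.cast_nonneg (hb0 n)) (fun n hn _ => hblock n (hm.trans hn))
    (le_max_left m k) hx hxy (hk.le.trans (pow_le_pow_right₀ one_le_two (le_max_right m k)))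
  have hsum : ∑ n ∈ Finset.Ico m (max m k), K * b n ≤ K * ∑' i, b (i + m) := by
    rw [← Finset.mul_sum, Finset.sum_Ico_eq_sum_range]
    gcongr
    simpa [add_comm] using ((summable_nat_add_iff m).2 hb).sum_le_tsum _ (fun i _ => hb0 _)
  linarith

noncomputable def dyadicSample (R : ℝ) (ε : ℝ → ℝ) (n : ℕ) : ℝ :=
  if R⁻¹ ≤ 2 ^ n then ε (2 ^ n) else 0

-- The window of (i) is widened by one because the right end `2ⁿ⁺¹` of a closed block
-- belongs to the next block.
noncomputable def dyadicMajorant (R : ℝ) (ε : ℝ → ℝ) (c : ℝ) (N n : ℕ) : ℝ :=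
  c * ∑ j ∈ Finset.range (2 * N + 2), dyadicSample R ε (n - N + j)

section dyadic

variable {R c : ℝ} {ε : ℝ → ℝ} {N : ℕ}

theorem dyadicSample_nonneg (hε : ∀ l, R⁻¹ ≤ l → 0 ≤ ε l) (n : ℕ) : 0 ≤ dyadicSample R ε n := by
  unfold dyadicSample
  split_ifs with h
  exacts [hε _ h, le_rfl]

theorem dyadicMajorant_nonneg (hc : 0 ≤ c) (hε : ∀ l, R⁻¹ ≤ l → 0 ≤ ε l) (n : ℕ) :
    0 ≤ dyadicMajorant R ε c N n :=
  mul_nonneg hc (Finset.sum_nonneg fun _ _ => dyadicSample_nonneg hε _)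

theorem summable_dyadicMajorant (h : Summable (dyadicSample R ε)) :
    Summable (dyadicMajorant R ε c N) := by
  refine (summable_nat_add_iff N).1 ?_
  simp only [dyadicMajorant, Nat.add_sub_cancel]
  exact (summable_sum fun j _ => (summable_nat_add_iff j).2 h).mul_left c

theorem sum_Icc_zpow_eq_sum_dyadicSample {n : ℕ} (hNn : N ≤ n) (hR : R⁻¹ ≤ 2 ^ (n - N)) :
    ∑ j ∈ Finset.Icc (-(N : ℤ)) N, ε (2 ^ ((n : ℤ) + j)) =
      ∑ i ∈ Finset.range (2 * N + 1), dyadicSample R ε (n - N + i) := by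
  rw [Int.Icc_eq_finset_map, Finset.sum_map, show ((N : ℤ) + 1 - -N).toNat = 2 * N + 1 by omega]
  refine Finset.sum_congr rfl fun i _ => ?_
  rw [dyadicSample, if_pos (hR.trans (pow_le_pow_right₀ one_le_two (by omega))), ← zpow_natCast]
  congr 2
  simp only [Function.Embedding.trans_apply, Nat.castEmbedding_apply, addLeftEmbedding_apply]
  omega

theorem le_dyadicMajorant (hc : 0 ≤ c) (hε : ∀ l, R⁻¹ ≤ l → 0 ≤ ε l)
    (h1 : ∀ (n : ℕ) (l : ℝ), 2 ^ n ≤ l → l < 2 ^ (n + 1) → R⁻¹ < 2 ^ ((n : ℤ) - N) →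
      ε l ≤ c * ∑ j ∈ Finset.Icc (-(N : ℤ)) N, ε (2 ^ ((n : ℤ) + j)))
    {n : ℕ} (hNn : N ≤ n) (hn : R⁻¹ < 2 ^ (n - N)) {l : ℝ} (hl : 2 ^ n ≤ l)
    (hl' : l ≤ 2 ^ (n + 1)) :
    ε l ≤ dyadicMajorant R ε c N n := by
  have hzpow (k : ℕ) (hk : N ≤ k) : (2 : ℝ) ^ ((k : ℤ) - N) = 2 ^ (k - N) := by
    rw [← Nat.cast_sub hk, zpow_natCast]
  have hsample := dyadicSample_nonneg hε
  unfold dyadicMajorant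
  rcases hl'.lt_or_eq with hlt | rfl
  · calc ε l ≤ c * ∑ j ∈ Finset.Icc (-(N : ℤ)) N, ε (2 ^ ((n : ℤ) + j)) :=
          h1 n l hl hlt (by rwa [hzpow n hNn])
      _ = c * ∑ i ∈ Finset.range (2 * N + 1), dyadicSample R ε (n - N + i) := by
          rw [sum_Icc_zpow_eq_sum_dyadicSample hNn hn.le]
      _ ≤ _ := mul_le_mul_of_nonneg_left (Finset.sum_le_sum_of_subset_of_nonneg
          (Finset.range_subset_range.2 (by omega)) fun _ _ _ => hsample _) hc
  · have hn' : R⁻¹ < 2 ^ (n + 1 - N) := hn.trans_le (pow_le_pow_right₀ one_le_two (by omega))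
    calc ε (2 ^ (n + 1)) ≤ c * ∑ j ∈ Finset.Icc (-(N : ℤ)) N, ε (2 ^ (((n + 1 : ℕ) : ℤ) + j)) :=
          h1 (n + 1) _ le_rfl (pow_lt_pow_right₀ one_lt_two (by omega))
            (by rwa [hzpow _ (by omega)])
      _ = c * ∑ i ∈ Finset.range (2 * N + 1), dyadicSample R ε (n - N + (i + 1)) := by
          rw [sum_Icc_zpow_eq_sum_dyadicSample (by omega) hn'.le]
          congr 1
          exact Finset.sum_congr rfl fun i _ => by congr 1; omega
      _ ≤ _ := by
          rw [Finset.sum_range_succ' _ (2 * N + 1)]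
          gcongr
          exact le_add_of_nonneg_right (hsample _)

end dyadic

theorem le_add_of_oscillation_bound {f ε : ℝ → ℝ} {R r₁ r₂ ρ : ℝ} (hr₁ : 0 < r₁)
    (hρ : ρ * r₁ < r₂) (h3 : ∀ l : ℝ, R⁻¹ ≤ l → ∀ r ∈ Ioo r₁ r₂, f (r / l) - f (r₁ / l) ≥ -ε l)
    {x y : ℝ} (hx : R⁻¹ ≤ x) (hx0 : 0 < x) (hxy : x < y) (hyx : y ≤ ρ * x) :
    f (r₁ / y) ≤ f (r₁ / x) + ε y := by
  have hr : r₁ * y / x ∈ Ioo r₁ r₂ :=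
    ⟨(lt_div_iff₀ hx0).2 (by nlinarith), (div_lt_iff₀ hx0).2 (by nlinarith)⟩
  have h := h3 y (hx.trans hxy.le) _ hr
  rw [show r₁ * y / x / y = r₁ / x by field_simp [(hx0.trans hxy).ne']] at h
  linarith

theorem eventually_le_add_nhdsWithin_of_atTop {f : ℝ → ℝ} {r η : ℝ} (hr : 0 < r) {S : Set ℝ}
    (hS : S ⊆ Ioi 0) (h : ∀ᶠ x in atTop, ∀ y, x ≤ y → f (r / y) ≤ f (r / x) + η) :
    ∀ᶠ t in 𝓝[S] 0, ∀ᶠ s in 𝓝[S] 0, f s ≤ f t + η := by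
  have hT : Tendsto (fun t => r / t) (𝓝[S] 0) atTop := by
    simpa only [div_eq_mul_inv] using
      (tendsto_inv_nhdsGT_zero.const_mul_atTop hr).mono_left (nhdsWithin_mono _ hS)
  filter_upwards [hT.eventually h, self_mem_nhdsWithin] with t ht htS
  filter_upwards [self_mem_nhdsWithin, nhdsWithin_le_nhds (Iic_mem_nhds (hS htS))] with s hsS hst
  have h := ht (r / s) (div_le_div_of_nonneg_left hr.le (hS hsS) hst)
  rwa [div_div_cancel₀ hr.ne', div_div_cancel₀ hr.ne'] at h

theorem convergence_test_part1_general (R : ℝ) (hR0 : 0 < R)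
    (f : ℝ → ℝ) (ε : ℝ → ℝ)
    (hε : ∀ l : ℝ, R⁻¹ ≤ l → 0 < ε l)
    (r₁ r₂ : ℝ) (hr₁ : 0 < r₁) (hr₁₂ : r₁ < r₂)
    (h1 : ∃ c > (0 : ℝ), ∃ N : ℕ, ∀ (n : ℕ) (l : ℝ),
      (2 : ℝ) ^ n ≤ l → l < (2 : ℝ) ^ (n + 1) → R⁻¹ < (2 : ℝ) ^ ((n : ℤ) - (N : ℤ)) →
      ε l ≤ c * ∑ j ∈ Finset.Icc (-(N : ℤ)) (N : ℤ), ε ((2 : ℝ) ^ ((n : ℤ) + j)))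
    (h2 : Summable fun n : ℕ => if R⁻¹ ≤ (2 : ℝ) ^ n then ε ((2 : ℝ) ^ n) else 0)
    (h3 : ∀ l : ℝ, R⁻¹ ≤ l → ∀ r ∈ Set.Ioo r₁ r₂, f (r / l) - f (r₁ / l) ≥ -ε l) :
    Filter.liminf (fun r => (f r : EReal)) (𝓝[Set.Ioc 0 R] 0) ≠ ⊤ ∧
    Filter.Tendsto (fun r => (f r : EReal)) (𝓝[Set.Ioc 0 R] 0)
      (𝓝 (Filter.liminf (fun r => (f r : EReal)) (𝓝[Set.Ioc 0 R] 0))) := by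
  obtain ⟨c, hc, N, h1⟩ := h1
  have hε' (l : ℝ) (hl : R⁻¹ ≤ l) : 0 ≤ ε l := (hε l hl).le
  obtain ⟨K, hK⟩ := pow_unbounded_of_one_lt 2 ((one_lt_div hr₁).2 hr₁₂)
  have hK0 : K ≠ 0 := by rintro rfl; norm_num at hK
  have hρ : (2 : ℝ) ^ (K⁻¹ : ℝ) * r₁ < r₂ := (lt_div_iff₀ hr₁).1 <|
    lt_of_pow_lt_pow_left₀ K (div_pos (hr₁.trans hr₁₂) hr₁).le
      (by rwa [Real.rpow_inv_natCast_pow zero_le_two hK0])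
  obtain ⟨M, hM⟩ := pow_unbounded_of_one_lt R⁻¹ one_lt_two
  have hRn (n : ℕ) (hn : M ≤ n) : R⁻¹ < 2 ^ n := hM.trans_le (pow_le_pow_right₀ one_le_two hn)
  have hstep (x y : ℝ) (hx : 2 ^ (N + M) ≤ x) :
      x < y → y ≤ 2 ^ (K⁻¹ : ℝ) * x → f (r₁ / y) ≤ f (r₁ / x) + ε y :=
    have hRx := (hRn (N + M) (by omega)).trans_le hx
    le_add_of_oscillation_bound hr₁ hρ h3 hRx.le ((inv_pos.2 hR0).trans hRx)
  have hεb (n : ℕ) (hn : N + M ≤ n) (l : ℝ) :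
      2 ^ n ≤ l → l ≤ 2 ^ (n + 1) → ε l ≤ dyadicMajorant R ε c N n :=
    le_dyadicMajorant hc.le hε' h1 (by omega) (hRn _ (by omega))
  have := left_nhdsWithin_Ioc_neBot hR0
  refine liminf_ne_top_and_tendsto_of_eventually_le_add fun η hη =>
    eventually_le_add_nhdsWithin_of_atTop hr₁ (fun _ h => h.1) ?_
  exact eventually_le_add_of_summable_dyadic_bound hK0 hstep
    (dyadicMajorant_nonneg hc.le hε') (summable_dyadicMajorant h2) hεb hη

/-- Convergence test (Lemma on convergence, part (1)): under the dyadic comparability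
condition (i), summability (ii), and the one-sided oscillation bound (iii), the function
`f` converges as `r → 0⁺` (within `(0, R]`) to its liminf, which is a real number or `−∞`. -/
theorem convergence_test_part1 (R : ℝ) (hR0 : 0 < R) (hR1 : R ≤ 1)
    (f : ℝ → ℝ) (ε : ℝ → ℝ)
    (hε : ∀ l : ℝ, R⁻¹ ≤ l → 0 < ε l)
    (r₁ r₂ : ℝ) (hr₁ : 0 < r₁) (hr₁₂ : r₁ < r₂) (hr₂ : r₂ ≤ R)
    (h1 : ∃ c > (0 : ℝ), ∃ N : ℕ, ∀ (n : ℕ) (l : ℝ),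
      (2 : ℝ) ^ n ≤ l → l < (2 : ℝ) ^ (n + 1) → R⁻¹ < (2 : ℝ) ^ ((n : ℤ) - (N : ℤ)) →
      ε l ≤ c * ∑ j ∈ Finset.Icc (-(N : ℤ)) (N : ℤ), ε ((2 : ℝ) ^ ((n : ℤ) + j)))
    (h2 : Summable fun n : ℕ => if R⁻¹ ≤ (2 : ℝ) ^ n then ε ((2 : ℝ) ^ n) else 0)
    (h3 : ∀ l : ℝ, R⁻¹ ≤ l → ∀ r ∈ Set.Ioo r₁ r₂, f (r / l) - f (r₁ / l) ≥ -ε l) :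
    Filter.liminf (fun r => (f r : EReal)) (𝓝[Set.Ioc 0 R] 0) ≠ ⊤ ∧
    Filter.Tendsto (fun r => (f r : EReal)) (𝓝[Set.Ioc 0 R] 0)
      (𝓝 (Filter.liminf (fun r => (f r : EReal)) (𝓝[Set.Ioc 0 R] 0))) :=
  convergence_test_part1_general R hR0 f ε hε r₁ r₂ hr₁ hr₁₂ h1 h2 h3
end

section
/- For every real M > 0 there exists a constant c > 0 such that for every real λ ≥ 1 and every r ∈ (0, M] one has λ · ∫_{−1/λ}^{1/λ} |log |r − t|| dt ≤ c + c · min( log λ, |log r| ). -/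
/-!
After the substitution `s = r - t` the left side is `λ` times the integral of `|log s|` over
`[r - 1/λ, r + 1/λ]`. If `r ≥ 2/λ`, every point of that interval is within a factor `2` of `r`,
so the integrand is at most `|log r| + log 2`, and `|log r| ≤ log λ + log⁺ M` because
`1/λ ≤ r ≤ M`. If `r < 2/λ`, the interval lies in `[-3/λ, 3/λ]`, on which
`|log s| ≤ |log b| + (log b - log s)` with `b = 3/λ` integrates, by `∫ log = s log s - s`,
to `O((1 + log λ) / λ)`; and `r < 2/λ` gives `log λ ≤ |log r| + log 2`.
-/

open MeasureTheory

namespace Real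

lemma abs_log_le_abs_log_add_log_sub_log {b s : ℝ} (hsb : |s| ≤ b) :
    |log s| ≤ |log b| + (log b - log s) := by
  rcases eq_or_ne s 0 with rfl | hs
  · simp only [log_zero, abs_zero, sub_zero]; linarith [neg_abs_le (log b)]
  have hlog : log s ≤ log b := by
    rw [← log_abs]; exact log_le_log (abs_pos.mpr hs) hsb
  calc |log s| = |log b - (log b - log s)| := by ring_nf
    _ ≤ |log b| + |log b - log s| := abs_sub _ _
    _ = |log b| + (log b - log s) := by rw [abs_of_nonneg (sub_nonneg.mpr hlog)]

lemma abs_log_le_abs_log_add_log_two {r s : ℝ} (hr : 0 < r) (hs : |s - r| ≤ r / 2) :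
    |log s| ≤ |log r| + log 2 := by
  obtain ⟨hs₁, hs₂⟩ := abs_le.mp hs
  have hs0 : 0 < s := by linarith
  have hratio : |log (s / r)| ≤ log 2 := by
    refine abs_le.mpr ⟨?_, log_le_log (by positivity) ?_⟩
    · rw [← log_inv, ← one_div]
      exact log_le_log (by norm_num) ((div_le_div_iff₀ (by norm_num) hr).mpr (by linarith))
    · rw [div_le_iff₀ hr]; linarith
  calc |log s| = |log r + log (s / r)| := by rw [log_div hs0.ne' hr.ne']; ring_nf
    _ ≤ |log r| + |log (s / r)| := abs_add_le _ _
    _ ≤ |log r| + log 2 := by linarith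

end Real

open Real intervalIntegral

lemma integral_abs_log_symm_le {b : ℝ} (hb : 0 ≤ b) :
    ∫ s in (-b)..b, |log s| ≤ 2 * b * (|log b| + 1) := by
  have hg : IntervalIntegrable (fun s => |log b| + (log b - log s)) volume (-b) b :=
    intervalIntegrable_const.add (intervalIntegrable_const.sub intervalIntegrable_log')
  calc ∫ s in (-b)..b, |log s| ≤ ∫ s in (-b)..b, (|log b| + (log b - log s)) :=
        integral_mono_on (by linarith) intervalIntegrable_log'.abs hg
          fun s hs => abs_log_le_abs_log_add_log_sub_log (abs_le.mpr hs)
    _ = 2 * b * (|log b| + 1) := by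
        rw [integral_add intervalIntegrable_const
          (intervalIntegrable_const.sub intervalIntegrable_log'),
          integral_sub intervalIntegrable_const intervalIntegrable_log',
          integral_log]
        simp only [intervalIntegral.integral_const, smul_eq_mul, log_neg_eq_log]
        ring

lemma integral_abs_log_le_of_le_of_le {b u v : ℝ} (hu : -b ≤ u) (huv : u ≤ v) (hv : v ≤ b) :
    ∫ s in u..v, |log s| ≤ 2 * b * (|log b| + 1) :=
  (integral_mono_interval hu huv hv (ae_of_all _ fun _ => abs_nonneg _)
    intervalIntegrable_log'.abs).trans (integral_abs_log_symm_le (by linarith))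

lemma integral_abs_log_le_of_two_mul_le {r a : ℝ} (hr : 0 < r) (ha : 0 ≤ a)
    (hra : 2 * a ≤ r) :
    ∫ s in (r - a)..(r + a), |log s| ≤ 2 * a * (|log r| + log 2) := by
  calc ∫ s in (r - a)..(r + a), |log s| ≤ ∫ _ in (r - a)..(r + a), (|log r| + log 2) :=
        integral_mono_on (by linarith) intervalIntegrable_log'.abs intervalIntegrable_const
          fun s hs => abs_log_le_abs_log_add_log_two hr
            (abs_le.mpr ⟨by linarith [hs.1], by linarith [hs.2]⟩)
    _ = 2 * a * (|log r| + log 2) := by rw [intervalIntegral.integral_const, smul_eq_mul]; ring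

lemma integral_abs_log_abs_sub (r a : ℝ) :
    ∫ t in (-a)..a, |log (|r - t|)| = ∫ s in (r - a)..(r + a), |log s| := by
  simp only [log_abs]
  simpa [sub_neg_eq_add] using integral_comp_sub_left (fun s => |log s|) r (a := -a) (b := a)

lemma log_le_abs_log_add_log_two {l r : ℝ} (hl : 0 < l) (hr : 0 < r) (h : r * l ≤ 2) :
    log l ≤ |log r| + log 2 := by
  have := log_le_log (by positivity) h
  rw [log_mul hr.ne' hl.ne'] at this
  linarith [neg_abs_le (log r)]

lemma abs_log_le_log_add_max_log {l r M : ℝ} (hl : 1 ≤ l) (hr : 0 < r) (hrM : r ≤ M)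
    (h : 1 ≤ r * l) : |log r| ≤ log l + max (log M) 0 := by
  have hrl := log_nonneg h
  rw [log_mul hr.ne' (by linarith)] at hrl
  have hlogM := log_le_log hr hrM
  refine abs_le'.mpr ⟨?_, ?_⟩
  · linarith [log_nonneg hl, le_max_left (log M) 0]
  · linarith [le_max_right (log M) 0]

lemma mul_integral_abs_log_le_of_two_le_mul {l r M : ℝ} (hl : 1 ≤ l) (hr : 0 < r)
    (hrM : r ≤ M) (h : 2 ≤ r * l) :
    l * ∫ s in (r - 1 / l)..(r + 1 / l), |log s|
      ≤ 2 + 2 * max (log M) 0 + 2 * min (log l) |log r| := by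
  have hl0 : 0 < l := by linarith
  have hI := integral_abs_log_le_of_two_mul_le (a := 1 / l) hr (by positivity)
    (by rw [mul_one_div, div_le_iff₀ hl0]; exact h)
  have hK := abs_log_le_log_add_max_log hl hr hrM (by linarith)
  have hmin : |log r| - max (log M) 0 ≤ min (log l) |log r| :=
    le_min (by linarith) (by linarith [le_max_right (log M) 0])
  have hlog2 : log 2 ≤ 1 := by linarith [log_le_sub_one_of_pos (by norm_num : (0 : ℝ) < 2)]
  calc l * ∫ s in (r - 1 / l)..(r + 1 / l), |log s|
      ≤ l * (2 * (1 / l) * (|log r| + log 2)) := mul_le_mul_of_nonneg_left hI hl0.le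
    _ = 2 * (|log r| + log 2) := by field_simp
    _ ≤ 2 + 2 * max (log M) 0 + 2 * min (log l) |log r| := by linarith

lemma mul_integral_abs_log_le_of_mul_lt_two {l r : ℝ} (hl : 1 ≤ l) (hr : 0 < r)
    (h : r * l < 2) :
    l * ∫ s in (r - 1 / l)..(r + 1 / l), |log s| ≤ 24 + 6 * min (log l) |log r| := by
  have hl0 : 0 < l := by linarith
  have hl' : 0 < 1 / l := by positivity
  have hr2 : r ≤ 2 * (1 / l) := by rw [mul_one_div, le_div_iff₀ hl0]; exact h.le
  have hI := integral_abs_log_le_of_le_of_le (b := 3 * (1 / l)) (u := r - 1 / l)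
    (v := r + 1 / l) (by linarith) (by linarith) (by linarith)
  have hlog3l : |log (3 * (1 / l))| ≤ log 3 + log l := by
    rw [log_mul (by norm_num) (by positivity), one_div, log_inv]
    calc |log 3 + -log l| ≤ |log 3| + |-log l| := abs_add_le _ _
      _ = log 3 + log l := by
        rw [abs_neg, abs_of_nonneg (log_nonneg (by norm_num)), abs_of_nonneg (log_nonneg hl)]
  have hmin : log l - log 2 ≤ min (log l) |log r| :=
    le_min (by linarith [log_nonneg (by norm_num : (1 : ℝ) ≤ 2)])
      (by linarith [log_le_abs_log_add_log_two hl0 hr h.le])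
  have hlog2 : log 2 ≤ 1 := by linarith [log_le_sub_one_of_pos (by norm_num : (0 : ℝ) < 2)]
  have hlog3 : log 3 ≤ 2 := by linarith [log_le_sub_one_of_pos (by norm_num : (0 : ℝ) < 3)]
  calc l * ∫ s in (r - 1 / l)..(r + 1 / l), |log s|
      ≤ l * (2 * (3 * (1 / l)) * (|log (3 * (1 / l))| + 1)) :=
        mul_le_mul_of_nonneg_left hI hl0.le
    _ = 6 * (|log (3 * (1 / l))| + 1) := by field_simp; ring
    _ ≤ 24 + 6 * min (log l) |log r| := by linarith

theorem one_dim_log_integral_estimate_general (M : ℝ) :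
    ∃ c > (0 : ℝ), ∀ l : ℝ, 1 ≤ l → ∀ r : ℝ, 0 < r → r ≤ M →
      l * ∫ t in (-(1 / l))..(1 / l), abs (Real.log (abs (r - t)))
        ≤ c + c * min (Real.log l) |Real.log r| := by
  refine ⟨24 + 2 * max (log M) 0, by positivity, fun l hl r hr hrM => ?_⟩
  have hK := le_max_right (log M) 0
  have hmin : 0 ≤ min (log l) |log r| := le_min (log_nonneg hl) (abs_nonneg _)
  have hscale : 6 * min (log l) |log r| ≤ (24 + 2 * max (log M) 0) * min (log l) |log r| :=
    mul_le_mul_of_nonneg_right (by linarith) hmin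
  rw [integral_abs_log_abs_sub]
  rcases le_or_gt 2 (r * l) with hfar | hnear
  · linarith [mul_integral_abs_log_le_of_two_le_mul hl hr hrM hfar]
  · linarith [mul_integral_abs_log_le_of_mul_lt_two hl hr hnear]

/-- Elementary one-dimensional estimate:
`λ · ∫_{−1/λ}^{1/λ} |log|r − t|| dt ≤ c + c·min(log λ, |log r|)` for `λ ≥ 1`, `0 < r ≤ M`. -/
theorem one_dim_log_integral_estimate (M : ℝ) (hM : 0 < M) :
    ∃ c > (0 : ℝ), ∀ l : ℝ, 1 ≤ l → ∀ r : ℝ, 0 < r → r ≤ M →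
      l * ∫ t in (-(1 / l))..(1 / l), abs (Real.log (abs (r - t)))
        ≤ c + c * min (Real.log l) |Real.log r| :=
  one_dim_log_integral_estimate_general M
end

section
/- For every real M > 0 there exists a constant c > 0 such that for every real λ ≥ 1 and every real r with 2/λ ≤ r ≤ M one has λ · ∫_{−1/λ}^{1/λ} |log |r − t|| dt ≤ c + c · |log r|. -/
open MeasureTheory

/-- Elementary one-dimensional estimate, far regime:
`λ · ∫_{−1/λ}^{1/λ} |log|r − t|| dt ≤ c + c·|log r|` for `λ ≥ 1` and `2/λ ≤ r ≤ M`. -/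
theorem one_dim_log_integral_estimate_far (M : ℝ) (hM : 0 < M) :
    ∃ c > (0 : ℝ), ∀ l : ℝ, 1 ≤ l → ∀ r : ℝ, 2 / l ≤ r → r ≤ M →
      l * ∫ t in (-(1 / l))..(1 / l), abs (Real.log (abs (r - t)))
        ≤ c + c * |Real.log r| := by
  refine ⟨2, by norm_num, ?_⟩
  intro l hl r hrl hrM
  have hl0 : (0:ℝ) < l := lt_of_lt_of_le one_pos hl
  have h1l : (0:ℝ) < 1 / l := by positivity
  have h2l : (2:ℝ) / l = 2 * (1 / l) := by ring
  have hr0 : (0:ℝ) < r := lt_of_lt_of_le (by positivity) hrl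
  have h1lr : 1 / l ≤ r / 2 := by linarith
  set C := |Real.log r| + Real.log 2 with hC
  have hbound : ∀ t ∈ Set.uIoc (-(1/l)) (1/l),
      ‖abs (Real.log (abs (r - t)))‖ ≤ C := by
    intro t ht
    rw [Set.uIoc_of_le (by linarith)] at ht
    obtain ⟨ht1, ht2⟩ := ht
    have hpos : 0 < r - t := by linarith
    have hle2r : r - t ≤ 2 * r := by linarith
    have hger2 : r / 2 ≤ r - t := by linarith
    rw [abs_of_pos hpos, Real.norm_eq_abs, abs_abs]
    have key : Real.log (r - t) = Real.log ((r - t) / r) + Real.log r := by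
      rw [Real.log_div (ne_of_gt hpos) (ne_of_gt hr0)]; ring
    have ha1 : (1:ℝ)/2 ≤ (r - t) / r := by
      rw [le_div_iff₀ hr0]; linarith
    have ha2 : (r - t) / r ≤ 2 := by
      rw [div_le_iff₀ hr0]; linarith
    have habs : |Real.log ((r - t) / r)| ≤ Real.log 2 := by
      rw [abs_le]
      constructor
      · have h := Real.log_le_log (by norm_num : (0:ℝ) < 1/2) ha1
        have : Real.log ((1:ℝ)/2) = -Real.log 2 := by
          rw [one_div, Real.log_inv]
        linarith
      · exact Real.log_le_log (by positivity) ha2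
    calc |Real.log (r - t)| = |Real.log ((r - t) / r) + Real.log r| := by rw [key]
      _ ≤ |Real.log ((r - t) / r)| + |Real.log r| := abs_add_le _ _
      _ ≤ Real.log 2 + |Real.log r| := by linarith
      _ = C := by rw [hC]; ring
  have hC0 : 0 ≤ C := le_trans (by positivity) (hbound 0 (by
    rw [Set.uIoc_of_le (by linarith)]; constructor <;> linarith))
  have hnorm := intervalIntegral.norm_integral_le_of_norm_le_const hbound
  have hlen : |1 / l - -(1 / l)| = 2 / l := by
    rw [abs_of_pos (by linarith : (0:ℝ) < 1/l - -(1/l))]; ring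
  rw [hlen] at hnorm
  have hint : (∫ t in (-(1 / l))..(1 / l), abs (Real.log (abs (r - t))))
      ≤ C * (2 / l) := le_trans (le_abs_self _) (by rwa [Real.norm_eq_abs] at hnorm)
  have hlog2 : Real.log 2 ≤ 1 := by
    have := Real.log_two_lt_d9; linarith
  calc l * ∫ t in (-(1 / l))..(1 / l), abs (Real.log (abs (r - t)))
      ≤ l * (C * (2 / l)) := mul_le_mul_of_nonneg_left hint hl0.le
    _ = 2 * C := by field_simp
    _ = 2 * Real.log 2 + 2 * |Real.log r| := by rw [hC]; ring
    _ ≤ 2 + 2 * |Real.log r| := by linarith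
end

section
/- For every real M > 0 there exists a constant c > 0 such that for every real λ ≥ 1 and every r ∈ [0, M] one has λ · ∫_{−1/λ}^{1/λ} |log |r − t|| dt ≤ c + c · log λ. -/
/-!
On the interval of integration `|r - t| ≤ M + 1`, and for `|x| ≤ R` with `R ≥ 1` one has
`|log x| ≤ 2 log R - log x`. This reduces the estimate to a lower bound for `∫ log` over an
interval of length `2a = 2/λ` centred at `r ≥ 0`; by the explicit antiderivative `x log x - x`
that integral is smallest for the interval centred at `0`, where it equals `2a (log a - 1)`.
-/

open Real intervalIntegral

lemma log_le_log_of_abs_le {x R : ℝ} (hR : 1 ≤ R) (hx : |x| ≤ R) : log x ≤ log R := by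
  rcases eq_or_ne x 0 with rfl | hx0
  · simpa using log_nonneg hR
  · rw [← log_abs]
    exact log_le_log (abs_pos.mpr hx0) hx

lemma abs_log_le_two_mul_log_sub_log {x R : ℝ} (hR : 1 ≤ R) (hx : |x| ≤ R) :
    |log x| ≤ 2 * log R - log x := by
  have hlogR := log_nonneg hR
  have hlogx := log_le_log_of_abs_le hR hx
  exact abs_le.mpr ⟨by linarith, by linarith⟩

lemma integral_log_centered_le_integral_log {a b : ℝ} (ha : 0 ≤ a) (hb : 0 ≤ b) :
    ∫ x in -a..a, log x ≤ ∫ x in b - a..b + a, log x := by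
  simp only [integral_log, log_neg_eq_log]
  rcases le_or_gt a b with hab | hba
  · rcases ha.eq_or_lt with rfl | ha
    · simp
    have hlog_a : log a ≤ log (b + a) := log_le_log ha (by linarith)
    have hlog_sub : (b - a) * log (b - a) ≤ (b - a) * log (b + a) := by
      rcases (sub_nonneg.mpr hab).eq_or_lt with hab' | hab'
      · simp [← hab']
      · exact mul_le_mul_of_nonneg_left (log_le_log hab' (by linarith)) hab'.le
    nlinarith
  · have hmid := convexOn_mul_log.2 (Set.mem_Ici.mpr (by linarith : (0 : ℝ) ≤ a + b))
      (Set.mem_Ici.mpr (by linarith : (0 : ℝ) ≤ a - b)) (by norm_num : (0 : ℝ) ≤ 1 / 2)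
      (by norm_num : (0 : ℝ) ≤ 1 / 2) (by norm_num)
    have hcomb : (1 / 2 : ℝ) • (a + b) + (1 / 2 : ℝ) • (a - b) = a := by
      simp only [smul_eq_mul]; ring
    rw [hcomb] at hmid
    simp only [smul_eq_mul] at hmid
    rw [← neg_sub a b, log_neg_eq_log, add_comm b a]
    linarith

lemma integral_abs_log_le {a b R : ℝ} (ha : 0 ≤ a) (hb : 0 ≤ b) (hR : 1 ≤ R)
    (hbR : b + a ≤ R) :
    ∫ x in b - a..b + a, |log x| ≤ 2 * a * (2 * log R - log a + 1) := by
  have hmono : ∫ x in b - a..b + a, |log x| ≤ ∫ x in b - a..b + a, (2 * log R - log x) := by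
    refine integral_mono_on (by linarith) intervalIntegrable_log'.abs
      (intervalIntegrable_const.sub intervalIntegrable_log') fun x hx => ?_
    exact abs_log_le_two_mul_log_sub_log hR (abs_le.mpr ⟨by linarith [hx.1], by linarith [hx.2]⟩)
  have hcentered := integral_log_centered_le_integral_log ha hb
  rw [integral_sub intervalIntegrable_const intervalIntegrable_log', integral_const,
    smul_eq_mul] at hmono
  simp only [integral_log, log_neg_eq_log] at hcentered hmono
  linarith

/-- Elementary one-dimensional estimate, near regime:
`λ · ∫_{−1/λ}^{1/λ} |log|r − t|| dt ≤ c + c·log λ` for `λ ≥ 1` and `0 ≤ r ≤ M`. -/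
theorem one_dim_log_integral_estimate_near (M : ℝ) (hM : 0 < M) :
    ∃ c > (0 : ℝ), ∀ l : ℝ, 1 ≤ l → ∀ r : ℝ, 0 ≤ r → r ≤ M →
      l * ∫ t in (-(1 / l))..(1 / l), abs (Real.log (abs (r - t)))
        ≤ c + c * Real.log l := by
  have hlogM : 0 ≤ log (M + 1) := log_nonneg (by linarith)
  refine ⟨4 * log (M + 1) + 2, by positivity, fun l hl r hr hrM => ?_⟩
  have hl0 : 0 < l := by linarith
  have hlogl : 0 ≤ log l := log_nonneg hl
  have hbound := integral_abs_log_le (one_div_pos.mpr hl0).le hr (by linarith : (1 : ℝ) ≤ M + 1)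
    (by linarith [div_le_one_of_le₀ hl hl0.le] : r + 1 / l ≤ M + 1)
  simp only [log_abs]
  rw [integral_comp_sub_left (fun x => |log x|) r, sub_neg_eq_add]
  calc l * ∫ x in r - 1 / l..r + 1 / l, |log x|
      ≤ l * (2 * (1 / l) * (2 * log (M + 1) - log (1 / l) + 1)) := by gcongr
    _ = 4 * log (M + 1) + 2 * log l + 2 := by
        rw [one_div, log_inv]; field_simp; ring
    _ ≤ 4 * log (M + 1) + 2 + (4 * log (M + 1) + 2) * log l := by nlinarith
end

section
/- Let r₁, r₂, c₀ be real numbers with 0 < 2r₁ < r₂, c₀ ≥ 0 and c₀ r₂ ≤ 1/2. Then there exists M ∈ ℕ such that: (a) for every s ∈ (0, r₂) the set {n ∈ ℕ : a_n < s < b_n} is nonempty; (b) for every s > 0 the set {n ∈ ℕ : a_n < s < b_n} has at most M elements. In other words, the dyadic open intervals (a_n, b_n) cover (0, r₂) with covering multiplicity between 1 and M. -/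
/-!
Because `c₀ r ≤ 1/2`, the quadratic correction `c₀ r²/4ⁿ` is at most half of `r/2ⁿ`, so
`r₁/2ⁿ⁺¹ ≤ aₙ` and `bₙ ≤ 3r₂/2ⁿ⁺¹`. Hence `aₙ < s < bₙ` confines `2ⁿ` to the interval
`(r₁/2s, 3r₂/2s)`, whose endpoint ratio `3r₂/r₁` does not depend on `s`; this bounds the
multiplicity. The covering already holds for the uncorrected intervals `(r₁/2ⁿ, r₂/2ⁿ)`,
since `r₂ > 2r₁` makes consecutive ones overlap.
-/

open Set

section PowersInInterval

variable {α : Type*} [Semiring α] [LinearOrder α] [IsStrictOrderedRing α] {q x y : α} {K : ℕ}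

lemma setOf_pow_mem_Ioo_subset_Ico (hq : 1 < q) (hK : y ≤ x * q ^ K) :
    {n : ℕ | x < q ^ n ∧ q ^ n < y} ⊆
      Ico (sInf {n : ℕ | x < q ^ n ∧ q ^ n < y}) (sInf {n : ℕ | x < q ^ n ∧ q ^ n < y} + K) := by
  intro n hn
  set n₀ := sInf {n : ℕ | x < q ^ n ∧ q ^ n < y}
  have hn₀ : x < q ^ n₀ ∧ q ^ n₀ < y := Nat.sInf_mem ⟨n, hn⟩
  refine ⟨Nat.sInf_le hn, (pow_lt_pow_iff_right₀ hq).mp ?_⟩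
  calc q ^ n < y := hn.2
    _ ≤ x * q ^ K := hK
    _ < q ^ n₀ * q ^ K := mul_lt_mul_of_pos_right hn₀.1 (pow_pos (zero_lt_one.trans hq) K)
    _ = q ^ (n₀ + K) := (pow_add q n₀ K).symm

lemma finite_setOf_pow_mem_Ioo (hq : 1 < q) (hK : y ≤ x * q ^ K) :
    {n : ℕ | x < q ^ n ∧ q ^ n < y}.Finite :=
  (finite_Ico _ _).subset (setOf_pow_mem_Ioo_subset_Ico hq hK)

lemma ncard_setOf_pow_mem_Ioo_le (hq : 1 < q) (hK : y ≤ x * q ^ K) :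
    {n : ℕ | x < q ^ n ∧ q ^ n < y}.ncard ≤ K := by
  refine (ncard_le_ncard (setOf_pow_mem_Ioo_subset_Ico hq hK) (finite_Ico _ _)).trans ?_
  simp

end PowersInInterval

lemma exists_div_two_pow_mem_Ioo {a b s : ℝ} (hab : 2 * a < b) (hs : s ∈ Ioo 0 b) :
    ∃ n : ℕ, a / 2 ^ n < s ∧ s < b / 2 ^ n := by
  obtain ⟨hs0, hsb⟩ := hs
  rcases lt_or_ge (2 * a) s with has | has
  · exact ⟨0, by simpa using (by linarith : a < s), by simpa using hsb⟩
  · obtain ⟨n, hn, hn'⟩ := exists_nat_pow_near ((one_le_div hs0).mpr has) one_lt_two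
    refine ⟨n, ?_, ?_⟩
    · rw [div_lt_iff₀ (by positivity)]
      rw [div_lt_iff₀ hs0, pow_succ] at hn'
      linarith
    · rw [le_div_iff₀ hs0] at hn
      rw [lt_div_iff₀ (by positivity)]
      linarith

noncomputable def coronaInnerRadius (r c : ℝ) (n : ℕ) : ℝ := r / 2 ^ n - c * r ^ 2 / 4 ^ n

noncomputable def coronaOuterRadius (r c : ℝ) (n : ℕ) : ℝ := r / 2 ^ n + c * r ^ 2 / 4 ^ n

section CoronaRadii

variable {r c : ℝ} (n : ℕ)

lemma quadratic_correction_le (hr : 0 ≤ r) (hcr : c * r ≤ 1 / 2) :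
    c * r ^ 2 / 4 ^ n ≤ r / 2 ^ n / 2 := by
  have h2n : (1 : ℝ) ≤ 2 ^ n := one_le_pow₀ one_le_two
  have h4n : (4 : ℝ) ^ n = 2 ^ n * 2 ^ n := by rw [← mul_pow]; norm_num
  calc c * r ^ 2 / 4 ^ n = (c * r) * r / (2 ^ n * 2 ^ n) := by rw [h4n]; ring
    _ ≤ 1 / 2 * r / (2 ^ n * 1) := by gcongr
    _ = r / 2 ^ n / 2 := by ring

lemma coronaInnerRadius_le (hc : 0 ≤ c) : coronaInnerRadius r c n ≤ r / 2 ^ n := by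
  unfold coronaInnerRadius
  have : 0 ≤ c * r ^ 2 / 4 ^ n := by positivity
  linarith

lemma le_coronaOuterRadius (hc : 0 ≤ c) : r / 2 ^ n ≤ coronaOuterRadius r c n := by
  unfold coronaOuterRadius
  have : 0 ≤ c * r ^ 2 / 4 ^ n := by positivity
  linarith

lemma half_le_coronaInnerRadius (hr : 0 ≤ r) (hcr : c * r ≤ 1 / 2) :
    r / 2 ^ n / 2 ≤ coronaInnerRadius r c n := by
  unfold coronaInnerRadius
  linarith [quadratic_correction_le n hr hcr]

lemma coronaOuterRadius_le (hr : 0 ≤ r) (hcr : c * r ≤ 1 / 2) :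
    coronaOuterRadius r c n ≤ 3 * r / 2 ^ n / 2 := by
  unfold coronaOuterRadius
  have := quadratic_correction_le n hr hcr
  have : 3 * r / 2 ^ n / 2 = r / 2 ^ n + r / 2 ^ n / 2 := by ring
  linarith

lemma two_pow_mem_Ioo_of_mem_corona {r₁ r₂ s : ℝ} (hs : 0 < s)
    (hr₁ : 0 ≤ r₁) (hcr₁ : c * r₁ ≤ 1 / 2) (hr₂ : 0 ≤ r₂) (hcr₂ : c * r₂ ≤ 1 / 2)
    (h : coronaInnerRadius r₁ c n < s ∧ s < coronaOuterRadius r₂ c n) :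
    r₁ / (2 * s) < 2 ^ n ∧ 2 ^ n < 3 * r₂ / (2 * s) := by
  have hinner := (half_le_coronaInnerRadius n hr₁ hcr₁).trans_lt h.1
  have houter := h.2.trans_le (coronaOuterRadius_le n hr₂ hcr₂)
  rw [div_div, div_lt_iff₀ (by positivity)] at hinner
  rw [div_div, lt_div_iff₀ (by positivity)] at houter
  constructor
  · rw [div_lt_iff₀ (by positivity)]
    linarith
  · rw [lt_div_iff₀ (by positivity)]
    linarith

end CoronaRadii

/-- The dyadic open intervals `(r₁/2ⁿ − c₀r₁²/4ⁿ, r₂/2ⁿ + c₀r₂²/4ⁿ)` cover `(0, r₂)`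
with covering multiplicity between `1` and some finite `M`. -/
theorem dyadic_corona_covering (r₁ r₂ c₀ : ℝ)
    (h1 : 0 < 2 * r₁) (h2 : 2 * r₁ < r₂) (h3 : 0 ≤ c₀) (h4 : c₀ * r₂ ≤ 1 / 2) :
    ∃ M : ℕ,
      (∀ s ∈ Set.Ioo (0 : ℝ) r₂, ∃ n : ℕ,
        r₁ / 2 ^ n - c₀ * r₁ ^ 2 / 4 ^ n < s ∧ s < r₂ / 2 ^ n + c₀ * r₂ ^ 2 / 4 ^ n) ∧
      (∀ s : ℝ, 0 < s →
        {n : ℕ | r₁ / 2 ^ n - c₀ * r₁ ^ 2 / 4 ^ n < s ∧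
            s < r₂ / 2 ^ n + c₀ * r₂ ^ 2 / 4 ^ n}.Finite ∧
        {n : ℕ | r₁ / 2 ^ n - c₀ * r₁ ^ 2 / 4 ^ n < s ∧
            s < r₂ / 2 ^ n + c₀ * r₂ ^ 2 / 4 ^ n}.ncard ≤ M) := by
  have hr₁ : 0 ≤ r₁ := by linarith
  have hcr₁ : c₀ * r₁ ≤ 1 / 2 := (mul_le_mul_of_nonneg_left (by linarith) h3).trans h4
  obtain ⟨K, hK⟩ := pow_unbounded_of_one_lt (3 * r₂ / r₁) (one_lt_two (α := ℝ))
  rw [div_lt_iff₀ (by linarith)] at hK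
  refine ⟨K, fun s hs => ?_, fun s hs => ?_⟩
  · obtain ⟨n, hn₁, hn₂⟩ := exists_div_two_pow_mem_Ioo h2 hs
    exact ⟨n, (coronaInnerRadius_le n h3).trans_lt hn₁,
      hn₂.trans_le (le_coronaOuterRadius n h3)⟩
  · have hsub : {n : ℕ | coronaInnerRadius r₁ c₀ n < s ∧ s < coronaOuterRadius r₂ c₀ n} ⊆
        {n : ℕ | r₁ / (2 * s) < 2 ^ n ∧ 2 ^ n < 3 * r₂ / (2 * s)} :=
      fun n => two_pow_mem_Ioo_of_mem_corona n hs hr₁ hcr₁ (by linarith) h4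
    have hwindow : 3 * r₂ / (2 * s) ≤ r₁ / (2 * s) * 2 ^ K := by
      rw [div_mul_eq_mul_div]
      exact div_le_div_of_nonneg_right (by linarith) (by positivity)
    exact ⟨(finite_setOf_pow_mem_Ioo one_lt_two hwindow).subset hsub,
      (ncard_le_ncard hsub (finite_setOf_pow_mem_Ioo one_lt_two hwindow)).trans
        (ncard_setOf_pow_mem_Ioo_le one_lt_two hwindow)⟩
end
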